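/- Setting x_k = Sᵢ/e^{Hᵢ} for all 1 ≤ k ≤ i−1 simultaneously makes all partial derivatives ∂H(M)/∂x_k vanish. -/

import Mathlib

open Finset

noncomputable def pentropy {ι : Type*} [Fintype ι] (ℓ : ι → ℝ) : ℝ :=
  -∑ i, (ℓ i / ∑ j, ℓ j) * Real.log (ℓ i / ∑ j, ℓ j)

/-!
Writing `T = ∑ xⱼ` and `N = ∑ xⱼ log xⱼ`, the entropy is `H = log T - N / T`, so
`∂H/∂xᵢ = (N - T log xᵢ) / T²`. Its zeros are the points where `log xᵢ = N / T`. At the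
proposed point, `log (Sᵢ / e^{Hᵢ}) = log Sᵢ - Hᵢ` is the mean `Nᵢ / Sᵢ` of `log ℓⱼ` weighted
by `ℓⱼ`, and appending coordinates equal to `Sᵢ / e^{Hᵢ}` leaves that weighted mean unchanged.
So every free coordinate satisfies `log xᵢ = N / T`.
-/

open Real

section Entropy

variable {ι : Type*} [Fintype ι]

/-- No positivity is needed: zero coordinates and a zero total contribute `0` on both sides. -/
theorem pentropy_eq_log_sum_sub (f : ι → ℝ) :
    pentropy f = log (∑ i, f i) - (∑ i, f i * log (f i)) / ∑ i, f i := by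
  unfold pentropy
  set T := ∑ j, f j
  rcases eq_or_ne T 0 with hT | hT
  · simp [hT]
  have hterm : ∀ i, f i / T * log (f i / T) = f i * log (f i) / T - f i / T * log T := by
    intro i
    rcases eq_or_ne (f i) 0 with hi | hi
    · simp [hi]
    · rw [log_div hi hT]
      ring
  rw [sum_congr rfl fun i _ => hterm i, sum_sub_distrib, ← sum_div, ← sum_mul, ← sum_div,
    div_self hT, one_mul]
  ring

theorem log_sum_div_exp_pentropy (f : ι → ℝ) (hT : ∑ i, f i ≠ 0) :
    log ((∑ i, f i) / exp (pentropy f)) = (∑ i, f i * log (f i)) / ∑ i, f i := by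
  rw [log_div hT (exp_pos _).ne', log_exp, pentropy_eq_log_sum_sub]
  ring

theorem sum_comp_update {β M : Type*} [AddCommMonoid M] [DecidableEq ι] (φ : β → M)
    (f : ι → β) (i : ι) (y : β) :
    ∑ j, φ (Function.update f i y j) = φ y + ∑ j ∈ univ.erase i, φ (f j) := by
  rw [← add_sum_erase _ _ (mem_univ i), Function.update_self]
  congr 1
  exact sum_congr rfl fun j hj => by rw [Function.update_of_ne (ne_of_mem_erase hj)]

theorem hasDerivAt_pentropy_update [DecidableEq ι] (f : ι → ℝ) (i : ι) (hfi : f i ≠ 0)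
    (hT : ∑ j, f j ≠ 0) :
    HasDerivAt (fun y => pentropy (Function.update f i y))
      ((∑ j, f j * log (f j) - (∑ j, f j) * log (f i)) / (∑ j, f j) ^ 2) (f i) := by
  set c := ∑ j ∈ univ.erase i, f j
  set d := ∑ j ∈ univ.erase i, f j * log (f j)
  have hT_eq : ∑ j, f j = f i + c := (add_sum_erase _ _ (mem_univ i)).symm
  have hN_eq : ∑ j, f j * log (f j) = f i * log (f i) + d :=
    (add_sum_erase _ _ (mem_univ i)).symm
  have hfun : (fun y => pentropy (Function.update f i y)) =
      fun y => log (y + c) - (y * log y + d) / (y + c) := by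
    funext y
    have hT_y := sum_comp_update id f i y
    have hN_y := sum_comp_update (fun x => x * log x) f i y
    dsimp only [id] at hT_y hN_y
    rw [pentropy_eq_log_sum_sub, hT_y, hN_y]
  have hc : f i + c ≠ 0 := hT_eq ▸ hT
  have hsum : HasDerivAt (fun y => y + c) 1 (f i) := (hasDerivAt_id _).add_const c
  rw [hfun, hT_eq, hN_eq]
  refine ((hsum.log hc).sub (((hasDerivAt_mul_log hfi).add_const d).div hsum hc)).congr_deriv ?_
  field_simp
  ring

end Entropy

/-- At the point where every free bar equals `g = Sᵢ/e^{Hᵢ}`, all partial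
derivatives of the entropy vanish. -/
theorem partial_derivatives_vanish (m k : ℕ) (hk : 0 < k)
    (ℓ : Fin k → ℝ) (hℓ : ∀ j, 0 < ℓ j) (k' : Fin m) :
    HasDerivAt
      (fun y : ℝ => pentropy (Sum.elim
        (Function.update (fun _ : Fin m => (∑ j, ℓ j) / Real.exp (pentropy ℓ)) k' y) ℓ))
      0 ((∑ j, ℓ j) / Real.exp (pentropy ℓ)) := by
  have : Nonempty (Fin k) := ⟨⟨0, hk⟩⟩
  have hS : 0 < ∑ j, ℓ j := sum_pos (fun j _ => hℓ j) univ_nonempty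
  set g := (∑ j, ℓ j) / exp (pentropy ℓ)
  have hg : 0 < g := by positivity
  have hlog_g : ∑ j, ℓ j * log (ℓ j) = (∑ j, ℓ j) * log g := by
    rw [log_sum_div_exp_pentropy ℓ hS.ne']
    field_simp
  set x := Sum.elim (fun _ : Fin m => g) ℓ
  have hT : 0 < ∑ i, x i := by
    simp only [x, Fintype.sum_sum_type, Sum.elim_inl, Sum.elim_inr]
    positivity
  have hN : ∑ i, x i * log (x i) = (∑ i, x i) * log g := by
    simp only [x, Fintype.sum_sum_type, Sum.elim_inl, Sum.elim_inr, hlog_g, sum_const,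
      nsmul_eq_mul]
    ring
  simp_rw [Sum.elim_update_left]
  convert hasDerivAt_pentropy_update x (.inl k') hg.ne' hT.ne' using 1
  · simp [x, hN]
  · rfl
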